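/- arXiv:0911.5515 — 2 statements merged into one kernel-verified Lean document; each statement's English description precedes it below -/
import Mathlib

section
/- Let p be a positive integer and let π = (ρ1, ρ2, q) be a partial permutation of {1,…,p}, with deterministic set 𝒟 = {2j−1 : j ∉ ρ2} ∪ {2j : j ∉ ρ1} ⊆ ℤ/2p and associated equivalence relation σ(π) on 𝒟. Then every equivalence class of σ(π) has even cardinality. -/
open Relation

noncomputable section

instance pequivFintype {α β : Type*} [DecidableEq α] [Fintype α] [DecidableEq β] [Fintype β] :
    Fintype (α ≃. β) :=
  Fintype.ofInjective (fun f => (f : α → Option β)) fun _ _ h => PEquiv.ext (congrFun h)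

/-- The generating relation for `ρ(π)` on `ℤ/2p` for a partial permutation `π` of `{1,…,p}`
(modelled as a partial equivalence `Fin p ≃. Fin p`, with `j : Fin p` standing for
`j+1 ∈ {1,…,p}`): `2j ∼ 2π(j)` and `2j+1 ∼ 2π(j) − 1` for `j` in the domain of `π`. -/
def ppRel (p : ℕ) (π : Fin p ≃. Fin p) : ZMod (2 * p) → ZMod (2 * p) → Prop :=
  fun a b => ∃ j m : Fin p, π j = some m ∧
    ((a = ((2 * (j.val + 1) : ℕ) : ZMod (2 * p)) ∧
      b = ((2 * (m.val + 1) : ℕ) : ZMod (2 * p)))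
     ∨
     (a = ((2 * (j.val + 1) + 1 : ℕ) : ZMod (2 * p)) ∧
      b = ((2 * (m.val + 1) : ℕ) : ZMod (2 * p)) - 1))

/-- The equivalence classes of `ρ(π)`. -/
def ppClasses (p : ℕ) (π : Fin p ≃. Fin p) : Set (Set (ZMod (2 * p))) :=
  (EqvGen.setoid (ppRel p π)).classes

/-- The classes of `ρ(π)` consisting of even residues. -/
def ppEvenClasses (p : ℕ) (π : Fin p ≃. Fin p) : Set (Set (ZMod (2 * p))) :=
  {C ∈ ppClasses p π | ∀ x ∈ C, Even x.val}

/-- The classes of `ρ(π)` consisting of odd residues. -/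
def ppOddClasses (p : ℕ) (π : Fin p ≃. Fin p) : Set (Set (ZMod (2 * p))) :=
  {C ∈ ppClasses p π | ∀ x ∈ C, Odd x.val}

/-- `k(ρ(π))`: the number of even classes. -/
def ppK (p : ℕ) (π : Fin p ≃. Fin p) : ℕ := (ppEvenClasses p π).ncard

/-- `l(ρ(π))`: the number of odd classes. -/
def ppL (p : ℕ) (π : Fin p ≃. Fin p) : ℕ := (ppOddClasses p π).ncard

/-- The deterministic set `𝒟 = {2j−1 : j ∉ ρ2} ∪ {2j : j ∉ ρ1} ⊆ ℤ/2p`, where `ρ1` is the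
domain and `ρ2` the range of `π`. -/
def ppDet (p : ℕ) (π : Fin p ≃. Fin p) : Set (ZMod (2 * p)) :=
  {x | (∃ j : Fin p, π.symm j = none ∧
          x = ((2 * (j.val + 1) : ℕ) : ZMod (2 * p)) - 1) ∨
       (∃ j : Fin p, π j = none ∧
          x = ((2 * (j.val + 1) : ℕ) : ZMod (2 * p)))}

/-- The generating relation for `σ(π)` on `𝒟`: `k ∼ k+1` whenever both lie in `𝒟` and
`k ∼ l` whenever `k+1 ∼_{ρ(π)} l`. -/
def ppSigmaRel (p : ℕ) (π : Fin p ≃. Fin p) : ppDet p π → ppDet p π → Prop :=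
  fun a b => ((b : ZMod (2 * p)) = (a : ZMod (2 * p)) + 1) ∨
    EqvGen (ppRel p π) ((a : ZMod (2 * p)) + 1) (b : ZMod (2 * p))

/-- The equivalence classes of `σ(π)`. -/
def ppSigmaClasses (p : ℕ) (π : Fin p ≃. Fin p) : Set (Set (ppDet p π)) :=
  (EqvGen.setoid (ppSigmaRel p π)).classes

/-- `|σ(π)|`: the number of classes of `σ(π)`. -/
def ppSigmaCount (p : ℕ) (π : Fin p ≃. Fin p) : ℕ := (ppSigmaClasses p π).ncard

/-- `𝒟 ∪ (𝒟 + 1)`. -/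
def ppDetPlus (p : ℕ) (π : Fin p ≃. Fin p) : Set (ZMod (2 * p)) :=
  ppDet p π ∪ ((· + 1) '' ppDet p π)

/-- `kd(ρ(π))`: the number of even classes of `ρ(π)` meeting `𝒟 ∪ (𝒟+1)`. -/
def ppKd (p : ℕ) (π : Fin p ≃. Fin p) : ℕ :=
  {C ∈ ppEvenClasses p π | (C ∩ ppDetPlus p π).Nonempty}.ncard

/-- `ld(ρ(π))`: the number of odd classes of `ρ(π)` meeting `𝒟 ∪ (𝒟+1)`. -/
def ppLd (p : ℕ) (π : Fin p ≃. Fin p) : ℕ :=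
  {C ∈ ppOddClasses p π | (C ∩ ppDetPlus p π).Nonempty}.ncard

/-- `|ρ1|`: the cardinality of the domain of `π`. -/
def ppRho1Card (p : ℕ) (π : Fin p ≃. Fin p) : ℕ :=
  {j : Fin p | (π j).isSome}.ncard

/-!
The generators of `ρ(π)` form the graph of a partial injection of `ℤ/2p` that preserves
parity (`2(j+1) ↦ 2(π j+1)` and `2(j+1)+1 ↦ 2(π j+1)-1`), so every class of `ρ(π)` is a cycle
or a path, and a path has exactly one source and one sink. For `a ∈ 𝒟`, `a+1` is an endpoint
of such a path: an odd sink if `a` is even, an even source if `a` is odd. The other endpoint of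
that path lies again in `𝒟` and has the parity opposite to `a`. Sending `a` to it is an
injective map `𝒟 → 𝒟` that flips parity and stays inside each class of `σ(π)`, so it matches
the even and the odd elements of a class.
-/

open Function

namespace Relation

variable {α : Type*} {r : α → α → Prop}

theorem EqvGen.reflTransGen_or_reflTransGen (hl : Relator.LeftUnique r)
    (hr : Relator.RightUnique r) {x y : α} (h : EqvGen r x y) :
    ReflTransGen r x y ∨ ReflTransGen r y x := by
  induction h with
  | rel a b hab => exact .inl (.single hab)
  | refl a => exact .inl .refl
  | symm a b _ ih => exact ih.symm
  | trans a b c _ _ ihab ihbc =>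
    rcases ihab with hab | hba <;> rcases ihbc with hbc | hcb
    · exact .inl (hab.trans hbc)
    · rcases ReflTransGen.total_of_right_unique (r := swap r) (fun _ _ _ h₁ h₂ => hl h₁ h₂)
        (reflTransGen_swap.2 hab) (reflTransGen_swap.2 hcb) with hca | hac
      · exact .inr (reflTransGen_swap.1 hca)
      · exact .inl (reflTransGen_swap.1 hac)
    · exact ReflTransGen.total_of_right_unique hr hba hbc
    · exact .inr (hcb.trans hba)

theorem EqvGen.eq_of_sinks (hl : Relator.LeftUnique r) (hr : Relator.RightUnique r)
    {x y : α} (hx : ∀ z, ¬ r x z) (hy : ∀ z, ¬ r y z) (h : EqvGen r x y) : x = y := by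
  rcases h.reflTransGen_or_reflTransGen hl hr with hxy | hyx
  · obtain rfl | ⟨z, hxz, -⟩ := hxy.cases_head
    · rfl
    · exact (hx z hxz).elim
  · obtain rfl | ⟨z, hyz, -⟩ := hyx.cases_head
    · rfl
    · exact (hy z hyz).elim

theorem EqvGen.eq_of_sources (hl : Relator.LeftUnique r) (hr : Relator.RightUnique r)
    {x y : α} (hx : ∀ z, ¬ r z x) (hy : ∀ z, ¬ r z y) (h : EqvGen r x y) : x = y := by
  rcases h.reflTransGen_or_reflTransGen hl hr with hxy | hyx
  · obtain rfl | ⟨z, -, hzy⟩ := hxy.cases_tail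
    · rfl
    · exact (hy z hzy).elim
  · obtain rfl | ⟨z, -, hzx⟩ := hyx.cases_tail
    · rfl
    · exact (hx z hzx).elim

theorem exists_source_reflTransGen [Finite α] (hr : Relator.RightUnique r) {x : α}
    (hx : ∀ z, ¬ r x z) : ∃ y, (∀ z, ¬ r z y) ∧ ReflTransGen r y x := by
  by_contra! h
  have hpred : ∀ y : {y // ReflTransGen r y x}, ∃ z, r z y := fun y => by
    by_contra! hy
    exact h y hy y.2
  choose pred hpred using hpred
  let f : {y // ReflTransGen r y x} → {y // ReflTransGen r y x} :=
    fun y => ⟨pred y, .head (hpred y) y.2⟩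
  have hf : Injective f := fun y y' hyy' => by
    have hpred_eq : pred y = pred y' := congrArg Subtype.val hyy'
    exact Subtype.ext (hr (hpred y) (hpred_eq ▸ hpred y'))
  -- `x` has no successor, so it is missed by the injective map `f`.
  obtain ⟨y, hy⟩ := Finite.injective_iff_surjective.1 hf ⟨x, .refl⟩
  have hxy : r (pred y) y := hpred y
  rw [show pred y = x from congrArg Subtype.val hy] at hxy
  exact hx y hxy

theorem exists_sink_reflTransGen [Finite α] (hl : Relator.LeftUnique r) {x : α}
    (hx : ∀ z, ¬ r z x) : ∃ y, (∀ z, ¬ r y z) ∧ ReflTransGen r x y := by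
  obtain ⟨y, hy, hyx⟩ :=
    exists_source_reflTransGen (r := swap r) (fun _ _ _ h₁ h₂ => hl h₁ h₂) hx
  exact ⟨y, hy, reflTransGen_swap.1 hyx⟩

end Relation

theorem Set.even_ncard_of_injective_of_parity_flip {β : Type*} [Finite β] {C : Set β}
    (φ : β → ZMod 2) {s : β → β} (hs : Injective s) (hC : MapsTo s C C)
    (hφ : ∀ x, φ (s x) = φ x + 1) : Even C.ncard := by
  have hle : ∀ i : ZMod 2, (C ∩ φ ⁻¹' {i}).ncard ≤ (C ∩ φ ⁻¹' {i + 1}).ncard := fun i =>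
    ncard_le_ncard_of_injOn s (fun x ⟨hx, hi⟩ => ⟨hC hx, by simp_all⟩) hs.injOn
  have hodd : C \ φ ⁻¹' {0} = C ∩ φ ⁻¹' {1} := by
    have hne : ∀ i : ZMod 2, i ≠ 0 ↔ i = 1 := by decide
    ext x
    simp only [mem_sdiff, mem_inter_iff, mem_preimage, mem_singleton_iff, hne]
  rw [← ncard_inter_add_ncard_sdiff_eq_ncard C (φ ⁻¹' {0}), hodd]
  exact ⟨_, congrArg (· + _) (le_antisymm (hle 0) (hle 1))⟩

def ppEven (p : ℕ) (j : Fin p) : ZMod (2 * p) := ((2 * (j.val + 1) : ℕ) : ZMod (2 * p))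

def ppParity (p : ℕ) : ZMod (2 * p) →+* ZMod 2 := ZMod.castHom (dvd_mul_right 2 p) (ZMod 2)

section PartialPermutation

variable {p : ℕ} {π : Fin p ≃. Fin p} {a a' b : ZMod (2 * p)}

@[simp]
lemma ppParity_ppEven (j : Fin p) : ppParity p (ppEven p j) = 0 := by
  rw [ppEven, map_natCast, Nat.cast_mul, ZMod.natCast_self, zero_mul]

@[simp]
lemma ppParity_natCast (n : ℕ) : ppParity p n = n := map_natCast _ n

lemma ppEven_injective : Injective (ppEven p) := by
  intro j j' h
  have h2 : 2 * (j.val + 1) ≡ 2 * (j'.val + 1) [MOD 2 * p] :=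
    (ZMod.natCast_eq_natCast_iff _ _ _).1 h
  have h1 : j.val + 1 ≡ j'.val + 1 [MOD p] := Nat.ModEq.mul_left_cancel' two_ne_zero h2
  exact Fin.ext ((Nat.ModEq.add_right_cancel' 1 h1).eq_of_lt_of_lt j.2 j'.2)

lemma ppEven_ne_add_one (j m : Fin p) : ppEven p j ≠ ppEven p m + 1 := fun h => by
  simpa using congrArg (ppParity p) h

lemma ppEven_ne_sub_one (j m : Fin p) : ppEven p j ≠ ppEven p m - 1 := fun h => by
  simpa using congrArg (ppParity p) h

lemma exists_ppEven_eq [NeZero p] (hx : ppParity p a = 0) : ∃ j, ppEven p j = a := by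
  rw [← ZMod.natCast_zmod_val a, ppParity_natCast, ZMod.natCast_eq_zero_iff_even] at hx
  obtain ⟨k, hk⟩ := hx
  have hk_lt : k < p := by have := ZMod.val_lt a; omega
  rcases k with _ | k
  · refine ⟨⟨p - 1, by have := NeZero.pos p; omega⟩, ?_⟩
    rw [ppEven, Nat.sub_add_cancel NeZero.one_le, ZMod.natCast_self, ← ZMod.natCast_zmod_val a]
    simp [hk]
  · refine ⟨⟨k, by omega⟩, ?_⟩
    rw [ppEven, ← ZMod.natCast_zmod_val a, hk, Fin.val_mk]
    congr 1
    omega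

lemma ppRel_iff : ppRel p π a b ↔ ∃ j m, π j = some m ∧
    (a = ppEven p j ∧ b = ppEven p m ∨ a = ppEven p j + 1 ∧ b = ppEven p m - 1) := by
  simp only [ppRel, ppEven, Nat.cast_succ]

lemma ppRel_ppEven {j m : Fin p} (h : π j = some m) : ppRel p π (ppEven p j) (ppEven p m) :=
  ppRel_iff.2 ⟨j, m, h, .inl ⟨rfl, rfl⟩⟩

lemma ppRel_ppEven_add_one {j m : Fin p} (h : π j = some m) :
    ppRel p π (ppEven p j + 1) (ppEven p m - 1) :=
  ppRel_iff.2 ⟨j, m, h, .inr ⟨rfl, rfl⟩⟩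

lemma ppParity_eq_of_eqvGen (h : EqvGen (ppRel p π) a b) : ppParity p a = ppParity p b := by
  refine (Setoid.ker (ppParity p)).iseqv.eqvGen_iff.1 (h.mono fun x y hxy => ?_)
  obtain ⟨j, m, -, ⟨rfl, rfl⟩ | ⟨rfl, rfl⟩⟩ := ppRel_iff.1 hxy <;> simp [Setoid.ker_def]

lemma ppRel_eq_iff_eq {c c' : ZMod (2 * p)} (h : ppRel p π a b) (h' : ppRel p π c c') :
    a = c ↔ b = c' := by
  have hπ : ∀ {j j' m m'}, π j = some m → π j' = some m' → (j = j' ↔ m = m') :=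
    fun hm hm' => ⟨by rintro rfl; exact Option.some_inj.1 (hm.symm.trans hm'),
      by rintro rfl; exact π.inj hm hm'⟩
  obtain ⟨j, m, hm, ⟨rfl, rfl⟩ | ⟨rfl, rfl⟩⟩ := ppRel_iff.1 h <;>
    obtain ⟨j', m', hm', ⟨rfl, rfl⟩ | ⟨rfl, rfl⟩⟩ := ppRel_iff.1 h'
  · simpa only [ppEven_injective.eq_iff] using hπ hm hm'
  · exact iff_of_false (ppEven_ne_add_one _ _) (ppEven_ne_sub_one _ _)
  · exact iff_of_false (ppEven_ne_add_one _ _).symm (ppEven_ne_sub_one _ _).symm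
  · simpa only [add_left_inj, sub_left_inj, ppEven_injective.eq_iff] using hπ hm hm'

lemma ppRel_leftUnique : Relator.LeftUnique (ppRel p π) :=
  fun _ _ _ h h' => (ppRel_eq_iff_eq h h').2 rfl

lemma ppRel_rightUnique : Relator.RightUnique (ppRel p π) :=
  fun _ _ _ h h' => (ppRel_eq_iff_eq h h').1 rfl

lemma mem_ppDet_of_sink [NeZero p] (hb : ppParity p b = 0) (hsink : ∀ z, ¬ ppRel p π b z) :
    b ∈ ppDet p π := by
  obtain ⟨j, rfl⟩ := exists_ppEven_eq hb
  exact .inr ⟨j, Option.eq_none_iff_forall_ne_some.2 fun m hm => hsink _ (ppRel_ppEven hm), rfl⟩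

lemma mem_ppDet_of_source [NeZero p] (hb : ppParity p b = 1)
    (hsource : ∀ z, ¬ ppRel p π z b) : b ∈ ppDet p π := by
  obtain ⟨m, hm⟩ := exists_ppEven_eq (a := b + 1) (by simp [hb]; decide)
  refine .inl ⟨m, Option.eq_none_iff_forall_ne_some.2 fun j hj => ?_, eq_sub_of_add_eq hm.symm⟩
  exact hsource _ (eq_sub_of_add_eq hm.symm ▸ ppRel_ppEven_add_one (π.mem_iff_mem.1 hj))

lemma mem_ppDet_iff : a ∈ ppDet p π ↔
    (∃ m, π.symm m = none ∧ a = ppEven p m - 1) ∨ ∃ j, π j = none ∧ a = ppEven p j :=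
  Iff.rfl

lemma ppDet_add_one_sink_or_source (ha : a ∈ ppDet p π) :
    (ppParity p a = 0 ∧ ∀ z, ¬ ppRel p π (a + 1) z) ∨
      (ppParity p a = 1 ∧ ∀ z, ¬ ppRel p π z (a + 1)) := by
  obtain ⟨m, hm, rfl⟩ | ⟨j, hj, rfl⟩ := mem_ppDet_iff.1 ha
  · refine .inr ⟨by rw [map_sub, map_one, ppParity_ppEven]; decide, fun z hz => ?_⟩
    rw [sub_add_cancel] at hz
    obtain ⟨j, m', hjm', ⟨-, he⟩ | ⟨-, he⟩⟩ := ppRel_iff.1 hz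
    · rw [ppEven_injective he] at hm
      exact absurd (π.mem_iff_mem.2 hjm') (by simp [hm])
    · exact ppEven_ne_sub_one _ _ he
  · refine .inl ⟨ppParity_ppEven j, fun z hz => ?_⟩
    obtain ⟨j', m, hjm, ⟨he, -⟩ | ⟨he, -⟩⟩ := ppRel_iff.1 hz
    · exact ppEven_ne_add_one _ _ he.symm
    · rw [ppEven_injective (add_right_cancel he)] at hj
      exact absurd hjm (by simp [hj])

lemma exists_mem_ppDet_eqvGen_add_one [NeZero p] (ha : a ∈ ppDet p π) :
    ∃ b ∈ ppDet p π, EqvGen (ppRel p π) (a + 1) b ∧ ppParity p b = ppParity p a + 1 := by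
  rcases ppDet_add_one_sink_or_source ha with ⟨ha0, hsink⟩ | ⟨ha1, hsource⟩
  · obtain ⟨b, hb, hba⟩ := exists_source_reflTransGen ppRel_rightUnique hsink
    have hab : EqvGen (ppRel p π) (a + 1) b := .symm _ _ (EqvGen.reflTransGen_le_eqvGen _ _ _ hba)
    have hpar : ppParity p b = ppParity p a + 1 := by
      rw [← ppParity_eq_of_eqvGen hab, map_add, map_one]
    exact ⟨b, mem_ppDet_of_source (by rw [hpar, ha0, zero_add]) hb, hab, hpar⟩
  · obtain ⟨b, hb, hab⟩ := exists_sink_reflTransGen ppRel_leftUnique hsource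
    have hab : EqvGen (ppRel p π) (a + 1) b := EqvGen.reflTransGen_le_eqvGen _ _ _ hab
    have hpar : ppParity p b = ppParity p a + 1 := by
      rw [← ppParity_eq_of_eqvGen hab, map_add, map_one]
    exact ⟨b, mem_ppDet_of_sink (by rw [hpar, ha1]; decide) hb, hab, hpar⟩

lemma eq_of_eqvGen_add_one (ha : a ∈ ppDet p π) (ha' : a' ∈ ppDet p π)
    (h : EqvGen (ppRel p π) (a + 1) (a' + 1)) : a = a' := by
  have hpar : ppParity p a = ppParity p a' := by
    simpa only [map_add, add_left_inj] using ppParity_eq_of_eqvGen h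
  rcases ppDet_add_one_sink_or_source ha with ⟨ha0, hsink⟩ | ⟨ha1, hsource⟩ <;>
    rcases ppDet_add_one_sink_or_source ha' with ⟨ha0', hsink'⟩ | ⟨ha1', hsource'⟩
  · exact add_right_cancel (h.eq_of_sinks ppRel_leftUnique ppRel_rightUnique hsink hsink')
  · exact absurd (ha0.symm.trans (hpar.trans ha1')) zero_ne_one
  · exact absurd (ha0'.symm.trans (hpar.symm.trans ha1)) zero_ne_one
  · exact add_right_cancel (h.eq_of_sources ppRel_leftUnique ppRel_rightUnique hsource hsource')

end PartialPermutation

/-- For a partial permutation `π` of `{1,…,p}`, every equivalence class of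
`σ(π)` (an equivalence relation on the deterministic set `𝒟`) has even cardinality. -/
theorem statement9 (p : ℕ) (hp : 0 < p) (π : Fin p ≃. Fin p) :
    ∀ C ∈ ppSigmaClasses p π, Even C.ncard := by
  have : NeZero p := ⟨hp.ne'⟩
  rintro _ ⟨c, rfl⟩
  choose s hsD hs hpar using fun a : ppDet p π => exists_mem_ppDet_eqvGen_add_one a.2
  have hσ : ∀ a, ppSigmaRel p π a ⟨s a, hsD a⟩ := fun a => .inr (hs a)
  refine Set.even_ncard_of_injective_of_parity_flip (fun a => ppParity p a)
    (s := fun a => ⟨s a, hsD a⟩) (fun a a' h => Subtype.ext ?_) (fun a ha => ?_) hpar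
  · have hss : s a = s a' := congrArg Subtype.val h
    exact eq_of_eqvGen_add_one a.2 a'.2 (.trans _ _ _ (hs a) (hss ▸ .symm _ _ (hs a')))
  · exact EqvGen.trans _ _ _ (.symm _ _ (.rel _ _ (hσ a))) ha
end
end

section
/- Let E be an N×N complex matrix and let π be a permutation of {1,…,p}. Then Σ_{y : {1,…,p} → {1,…,N}} ∏_{j=1}^p E(y(π^{−1}(j)), y(j)) = ∏_{C orbit of π} Tr(E^{|C|}), where the product is over the orbits (cycles, including fixed points) of π and Tr denotes the non-normalized trace. -/
open Matrix Relation

noncomputable section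

/-- The orbits (cycles, including fixed points) of a permutation `π` of `{1,…,p}`: the
equivalence classes of the relation generated by `j ∼ π(j)`. -/
def permOrbits {p : ℕ} (π : Equiv.Perm (Fin p)) : Set (Set (Fin p)) :=
  (EqvGen.setoid (fun a b : Fin p => π a = b)).classes

/-!
Reindexed by `π`, the sum is `∑_y ∏_i E (y i) (y (π i))`. Each factor only involves coordinates
in a single orbit of `π`, so the sum splits into a product over the orbits, and it remains to
treat a transitive `π`. There the coordinate `y a` occurs in exactly two factors,
`E (y c) (y a) * E (y a) (y (π a))` with `π c = a`, and summing it out leaves `(E * E) (y c) (y (π a))`: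
a sum of the same shape for the cycle with `a` skipped and `E ^ 2` at `c`. Keeping track of the
exponents, induction on the length of the cycle reduces it to a single point, where the sum is
`trace (E ^ k)` with `k` the total exponent, i.e. the length of the cycle.
-/

open Finset Equiv Perm

namespace Equiv.Perm

variable {β : Type*} {τ : Perm β} {a : β}

theorem symm_apply_ne_self (ha : τ a ≠ a) : τ.symm a ≠ a :=
  fun h => ha (by rw [← h, apply_symm_apply, h])

theorem apply_coe_eq_iff (ha : τ a ≠ a) (i : {x // x ≠ a}) :
    τ i = a ↔ i = ⟨τ.symm a, symm_apply_ne_self ha⟩ := by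
  rw [← eq_symm_apply, Subtype.ext_iff]

theorem sameCycle_of_eqvGen {x y : β} (h : EqvGen (fun a b => τ a = b) x y) : τ.SameCycle x y :=
  (SameCycle.equivalence τ).eqvGen_iff.1 (h.mono fun _ _ hab => ⟨1, by simpa using hab⟩)

variable [DecidableEq β]

def shortcut (τ : Perm β) (a : β) : Perm {x // x ≠ a} :=
  (swap a (τ a) * τ).subtypePerm fun _ =>
    (swap a (τ a) * τ).injective.ne_iff' (by simp [swap_apply_right])

theorem shortcut_apply (τ : Perm β) (a : β) (x : {x // x ≠ a}) :
    (τ.shortcut a x : β) = if τ x = a then τ a else τ x := by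
  have hx : τ x ≠ τ a := τ.injective.ne x.2
  simp only [shortcut, subtypePerm_apply, mul_apply]
  split_ifs with h
  · rw [h, swap_apply_left]
  · exact swap_apply_of_ne_of_ne h hx

theorem sameCycle_shortcut [Finite β] (hτ : ∀ x y, τ.SameCycle x y) (ha : τ a ≠ a)
    (x y : {x // x ≠ a}) : (τ.shortcut a).SameCycle x y := by
  -- `r` sends `a` to `τ a`; each step of `τ` moves `r` by zero or one step of `shortcut`.
  let r : β → {x // x ≠ a} := fun z => if h : z = a then ⟨τ a, ha⟩ else ⟨z, h⟩
  have hr : ∀ z, (τ.shortcut a).SameCycle (r z) (r (τ z)) := by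
    intro z
    by_cases hz : z = a
    · subst hz
      simp only [r, dif_pos rfl, dif_neg ha]
      exact SameCycle.refl _ _
    · refine ⟨1, Subtype.ext ?_⟩
      simp only [zpow_one, r, dif_neg hz, shortcut_apply]
      split_ifs <;> simp_all
  have hpow : ∀ m : ℕ, (τ.shortcut a).SameCycle (r x) (r ((τ ^ m) x)) := by
    intro m
    induction m with
    | zero => exact SameCycle.refl _ _
    | succ m ih => exact ih.trans (by rw [pow_succ', mul_apply]; exact hr _)
  obtain ⟨m, hm⟩ := (hτ x y).exists_nat_pow_eq
  simpa [r, x.2, y.2, hm] using hpow m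

end Equiv.Perm

theorem Setoid.finprod_mem_classes {α M : Type*} [CommMonoid M] (s : Setoid α)
    (f : Set α → M) : ∏ᶠ C ∈ s.classes, f C = ∏ᶠ q : Quotient s, f {x | ⟦x⟧ = q} := by
  have hrange : s.classes = Set.range fun q : Quotient s => {x | ⟦x⟧ = q} := by
    ext C
    simp only [Setoid.classes, Set.mem_ofPred_eq, Set.mem_range, Quotient.exists, Quotient.eq]
    exact exists_congr fun y => eq_comm
  rw [hrange, finprod_mem_range]
  rintro ⟨a⟩ q h
  exact (Set.ext_iff.1 h a).1 rfl

namespace Matrix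

variable {n R : Type*} [Fintype n] [CommSemiring R]

theorem sum_prod_eq_prod_sum_fiber {α ι : Type*} [DecidableEq α] [Fintype α] [Fintype ι]
    [DecidableEq ι] (π : Perm α) (g : α → ι) (hg : ∀ x, g (π x) = g x) (M : α → Matrix n n R) :
    ∑ y : α → n, ∏ i, M i (y i) (y (π i)) =
      ∏ q, ∑ y : {x // g x = q} → n,
        ∏ i : {x // g x = q}, M i (y i) (y (π.subtypePerm (fun x => by rw [hg]) i)) := by
  let e : (α → n) ≃ ∀ q, ({x // g x = q} → n) :=
    { toFun := fun y q x => y x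
      invFun := fun z x => z (g x) ⟨x, rfl⟩
      left_inv := fun _ => rfl
      right_inv := fun z => by ext q ⟨x, rfl⟩; rfl }
  rw [Fintype.prod_sum, ← e.sum_comp]
  refine sum_congr rfl fun y _ => ?_
  rw [← Fintype.prod_fiberwise g]
  rfl

theorem sum_prod_eq_sum_prod_shortcut {β : Type*} [DecidableEq β] [Fintype β]
    (τ : Perm β) {a : β} (ha : τ a ≠ a) (M : β → Matrix n n R) :
    ∑ y : β → n, ∏ i, M i (y i) (y (τ i)) =
      ∑ y : {x // x ≠ a} → n, ∏ i : {x // x ≠ a},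
        (if τ i = a then M i * M a else M i) (y i) (y (τ.shortcut a i)) := by
  set c : {x // x ≠ a} := ⟨τ.symm a, symm_apply_ne_self ha⟩
  have hτc : τ c = a := apply_symm_apply τ a
  have hshort_c : τ.shortcut a c = ⟨τ a, ha⟩ := by
    ext; simp [shortcut_apply, hτc]
  have hshort : ∀ i (hi : i ≠ c), τ.shortcut a i = ⟨τ i, (apply_coe_eq_iff ha i).not.2 hi⟩ :=
    fun i hi => by ext; simp [shortcut_apply, (apply_coe_eq_iff ha i).not.2 hi]
  rw [← (funSplitAt a n).symm.sum_comp, Fintype.sum_prod_type, sum_comm]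
  refine sum_congr rfl fun y _ => ?_
  have hsplit : ∀ v, ∏ i, M i ((funSplitAt a n).symm (v, y) i)
      ((funSplitAt a n).symm (v, y) (τ i)) =
        M c (y c) v * M a v (y ⟨τ a, ha⟩) * ∏ i ∈ univ.erase c, M i (y i) (y (τ.shortcut a i)) := by
    intro v
    have hy : ∀ z (hz : z ≠ a), (funSplitAt a n).symm (v, y) z = y ⟨z, hz⟩ :=
      fun z hz => by simp [hz]
    have hv : (funSplitAt a n).symm (v, y) a = v := by simp
    rw [Fintype.prod_eq_mul_prod_subtype_ne _ a, ← mul_prod_erase _ _ (mem_univ c),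
      hv, hy _ ha, hy _ c.2, hτc, hv, mul_left_comm, ← mul_assoc]
    congr 1
    refine prod_congr rfl fun i hi => ?_
    rw [hshort i (ne_of_mem_erase hi), hy _ i.2, hy]
  simp_rw [hsplit]
  rw [← sum_mul, ← mul_prod_erase _ _ (mem_univ c), if_pos ((apply_coe_eq_iff ha c).2 rfl),
    mul_apply, hshort_c]
  congr 1
  refine prod_congr rfl fun i hi => ?_
  rw [if_neg ((apply_coe_eq_iff ha i).not.2 (ne_of_mem_erase hi))]

variable [DecidableEq n]

theorem sum_prod_pow_eq_trace_pow_sum {β : Type*} [DecidableEq β] [Fintype β] [Nonempty β]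
    {τ : Perm β} (hτ : ∀ x y, τ.SameCycle x y) (E : Matrix n n R) (e : β → ℕ) :
    ∑ y : β → n, ∏ i, (E ^ e i) (y i) (y (τ i)) = (E ^ ∑ i, e i).trace := by
  revert τ e
  refine Finite.induction_subsingleton_or_nontrivial (P := fun β => ∀ [DecidableEq β] [Fintype β]
    [Nonempty β] {τ : Perm β}, (∀ x y, τ.SameCycle x y) → ∀ e : β → ℕ,
      ∑ y : β → n, ∏ i, (E ^ e i) (y i) (y (τ i)) = (E ^ ∑ i, e i).trace) β ?_ ?_
  · intro β _ _ _ _ _ τ _ e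
    obtain ⟨a⟩ := ‹Nonempty β›
    have := uniqueOfSubsingleton a
    rw [Fintype.sum_subsingleton _ a, trace, ← (funUnique β n).symm.sum_comp]
    refine sum_congr rfl fun k _ => ?_
    rw [Fintype.prod_subsingleton _ a, Subsingleton.elim (τ a) a]
    simp
  · intro β _ _ ih _ _ _ τ hτ e
    obtain ⟨a⟩ := ‹Nonempty β›
    have ha : τ a ≠ a := fun h => by
      obtain ⟨x, hx⟩ := exists_ne a
      exact hx ((hτ a x).eq_of_left h).symm
    have : Nonempty {x // x ≠ a} := ⟨⟨τ a, ha⟩⟩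
    have hcard : Nat.card {x // x ≠ a} < Nat.card β := by
      simpa only [Nat.card_eq_fintype_card] using
        Fintype.card_subtype_lt (p := (· ≠ a)) (x := a) (by simp)
    let e' : {x // x ≠ a} → ℕ := fun i => e i + if τ i = a then e a else 0
    have hM : ∀ i : {x // x ≠ a},
        (if τ i = a then E ^ e i * E ^ e a else E ^ e i) = E ^ e' i := fun i => by
      split_ifs <;> simp [e', pow_add, *]
    have he' : ∑ i, e' i = ∑ i, e i := by
      simp_rw [e', sum_add_distrib, apply_coe_eq_iff ha, Fintype.sum_ite_eq',
        Fintype.sum_eq_add_sum_subtype_ne e a, add_comm]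
    rw [sum_prod_eq_sum_prod_shortcut τ ha, ← he', ← ih _ hcard (sameCycle_shortcut hτ ha) e']
    simp_rw [hM]

theorem sum_prod_eq_trace_pow_card {β : Type*} [DecidableEq β] [Fintype β] [Nonempty β]
    {τ : Perm β} (hτ : ∀ x y, τ.SameCycle x y) (E : Matrix n n R) :
    ∑ y : β → n, ∏ i, E (y i) (y (τ i)) = (E ^ Fintype.card β).trace := by
  simpa using sum_prod_pow_eq_trace_pow_sum hτ E fun _ => 1

end Matrix

/-- For an `N×N` complex matrix `E` and a permutation `π` of `{1,…,p}`,
`Σ_{y : {1,…,p} → {1,…,N}} ∏_j E(y(π⁻¹(j)), y(j)) = ∏_{C orbit of π} Tr(E^{|C|})`. -/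
theorem statement10 {N p : ℕ} (E : Matrix (Fin N) (Fin N) ℂ) (π : Equiv.Perm (Fin p)) :
    ∑ y : Fin p → Fin N, ∏ j : Fin p, E (y (π.symm j)) (y j) =
      ∏ᶠ C ∈ permOrbits π, Matrix.trace (E ^ C.ncard) := by
  classical
  let s := EqvGen.setoid fun a b : Fin p => π a = b
  have hπ : ∀ x, (⟦π x⟧ : Quotient s) = ⟦x⟧ := fun x =>
    Quotient.sound (EqvGen.rel (r := fun a b => π a = b) x _ rfl).symm
  calc ∑ y : Fin p → Fin N, ∏ j, E (y (π.symm j)) (y j)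
      = ∑ y : Fin p → Fin N, ∏ i, E (y i) (y (π i)) :=
        sum_congr rfl fun y _ => by rw [← Equiv.prod_comp π]; simp only [symm_apply_apply]
    _ = ∏ q : Quotient s, (E ^ Nat.card {x // ⟦x⟧ = q}).trace := by
        rw [sum_prod_eq_prod_sum_fiber π _ hπ fun _ => E]
        refine prod_congr rfl fun q _ => ?_
        have : Nonempty {x // ⟦x⟧ = q} := ⟨⟨q.out, q.out_eq⟩⟩
        rw [Nat.card_eq_fintype_card]
        exact sum_prod_eq_trace_pow_card (fun x y => sameCycle_subtypePerm.2
          (sameCycle_of_eqvGen (Quotient.exact (x.2.trans y.2.symm)))) E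
    _ = ∏ᶠ C ∈ permOrbits π, (E ^ C.ncard).trace := by
        rw [permOrbits, Setoid.finprod_mem_classes, finprod_eq_prod_of_fintype]
        rfl
end
end
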